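/- For a fixed complex d×d matrix A with operator norm bound Λ, the function p ↦ Δ_p(A) is Lipschitz continuous and nonincreasing on [2,∞). -/

import Mathlib

/-!
Write `Re⟨Aξ, I_p ξ⟩ = g ξ + (1 - 2/p) h ξ` with `g ξ = Re⟨Aξ, ξ⟩` and `h ξ = Re⟨Aξ, conj ξ⟩`.
The rotation `ξ ↦ i ξ` fixes `g` and negates `h`, so
`Δ_p(A) = inf_{|ξ| = 1} (g ξ - |1 - 2/p| |h ξ|)`. On `[2, ∞)` the map `p ↦ |1 - 2/p| = 1 - 2/p` is
nondecreasing and `1/2`-Lipschitz, and `|h| ≤ Λ`, so every term is nonincreasing and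
`Λ/2`-Lipschitz in `p`; both properties pass to the infimum.
-/

open scoped ComplexConjugate

noncomputable def Ip (p : ℝ) {d : ℕ} (ξ : EuclideanSpace ℂ (Fin d)) : EuclideanSpace ℂ (Fin d) :=
  WithLp.toLp 2 (fun i => ξ i + ((1 - 2 / p : ℝ) : ℂ) * conj (ξ i))

noncomputable def mulVecE {d : ℕ} (A : Matrix (Fin d) (Fin d) ℂ)
    (ξ : EuclideanSpace ℂ (Fin d)) : EuclideanSpace ℂ (Fin d) :=
  WithLp.toLp 2 (fun i => ∑ j, A i j * ξ j)

noncomputable def Delta (p : ℝ) {d : ℕ} (A : Matrix (Fin d) (Fin d) ℂ) : ℝ :=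
  sInf { r : ℝ | ∃ ξ : EuclideanSpace ℂ (Fin d), ‖ξ‖ = 1 ∧
    r = (@inner ℂ _ _ (mulVecE A ξ) (Ip p ξ)).re }

open Set Metric

theorem LipschitzOnWith.ciInf {ι α : Type*} [PseudoMetricSpace α] {F : ι → α → ℝ} {K : NNReal}
    {s : Set α} (hF : ∀ i, LipschitzOnWith K (F i) s)
    (hbdd : ∀ x ∈ s, BddBelow (range fun i => F i x)) :
    LipschitzOnWith K (fun x => ⨅ i, F i x) s := by
  cases isEmpty_or_nonempty ι
  · simpa using (LipschitzWith.const (0 : ℝ)).lipschitzOnWith.weaken bot_le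
  refine LipschitzOnWith.of_le_add_mul K fun x hx y hy => ?_
  rw [← sub_le_iff_le_add]
  exact le_ciInf fun i => sub_le_iff_le_add.mpr <|
    (ciInf_le (hbdd x hx) i).trans ((hF i).le_add_mul hx hy)

theorem AntitoneOn.ciInf {ι α β : Type*} [Preorder α] [ConditionallyCompleteLattice β]
    {F : ι → α → β} {s : Set α} (hF : ∀ i, AntitoneOn (F i) s)
    (hbdd : ∀ x ∈ s, BddBelow (range fun i => F i x)) :
    AntitoneOn (fun x => ⨅ i, F i x) s :=
  fun _ hx _ hy hxy => ciInf_mono (hbdd _ hy) fun i => hF i hx hy hxy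

theorem ciInf_add_mul_eq_ciInf_sub_abs_mul {ι : Type*} (g h : ι → ℝ) (t : ℝ)
    (hsymm : ∀ i, ∃ j, g j = g i ∧ h j = -h i)
    (hbdd : BddBelow (range fun i => g i - |t| * |h i|)) :
    ⨅ i, (g i + t * h i) = ⨅ i, (g i - |t| * |h i|) := by
  cases isEmpty_or_nonempty ι
  · simp
  have hle : ∀ i, g i - |t| * |h i| ≤ g i + t * h i := fun i => by
    nlinarith [abs_mul t (h i), neg_abs_le (t * h i)]
  have hbdd' : BddBelow (range fun i => g i + t * h i) := by
    obtain ⟨b, hb⟩ := hbdd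
    exact ⟨b, forall_mem_range.mpr fun i => (hb (mem_range_self i)).trans (hle i)⟩
  refine le_antisymm (le_ciInf fun i => ?_) (ciInf_mono hbdd hle)
  obtain ⟨j, hgj, hhj⟩ := hsymm i
  rcases le_total 0 (t * h i) with hth | hth
  · refine ciInf_le_of_le hbdd' j ?_
    rw [hgj, hhj, ← abs_mul, abs_of_nonneg hth]
    linarith
  · refine ciInf_le_of_le hbdd' i ?_
    rw [← abs_mul, abs_of_nonpos hth]
    linarith

theorem abs_one_sub_two_div_of_two_le {p : ℝ} (hp : 2 ≤ p) : |1 - 2 / p| = 1 - 2 / p :=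
  abs_of_nonneg <| sub_nonneg.mpr <| (div_le_one (by linarith)).mpr hp

theorem monotoneOn_abs_one_sub_two_div : MonotoneOn (fun p : ℝ => |1 - 2 / p|) (Ici 2) := by
  intro p hp q hq hpq
  simp only [abs_one_sub_two_div_of_two_le hp, abs_one_sub_two_div_of_two_le hq]
  gcongr
  exact lt_of_lt_of_le two_pos hp

theorem lipschitzOnWith_abs_one_sub_two_div :
    LipschitzOnWith (1 / 2) (fun p : ℝ => |1 - 2 / p|) (Ici 2) := by
  refine LipschitzOnWith.of_dist_le_mul fun p (hp : 2 ≤ p) q (hq : 2 ≤ q) => ?_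
  have hprod : 4 ≤ p * q := by nlinarith
  have hdiff : 1 - 2 / p - (1 - 2 / q) = 2 * (p - q) / (p * q) := by field_simp; ring
  rw [Real.dist_eq, Real.dist_eq, abs_one_sub_two_div_of_two_le hp,
    abs_one_sub_two_div_of_two_le hq, hdiff, abs_div, abs_mul,
    abs_of_pos (by positivity : 0 < p * q), div_le_iff₀ (by positivity)]
  push_cast
  nlinarith [abs_nonneg (p - q)]

theorem lipschitzOnWith_sub_abs_one_sub_two_div_mul (a : ℝ) {c M : ℝ} (hc : |c| ≤ M) :
    LipschitzOnWith (M.toNNReal / 2) (fun p : ℝ => a - |1 - 2 / p| * |c|) (Ici 2) := by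
  refine LipschitzOnWith.of_dist_le_mul fun p hp q hq => ?_
  calc dist (a - |1 - 2 / p| * |c|) (a - |1 - 2 / q| * |c|)
      = |c| * dist |1 - 2 / p| |1 - 2 / q| := by
        rw [Real.dist_eq, Real.dist_eq, sub_sub_sub_cancel_left, ← sub_mul, abs_mul, abs_abs,
          mul_comm, abs_sub_comm]
    _ ≤ M.toNNReal * ((1 / 2 : NNReal) * dist p q) :=
        mul_le_mul (hc.trans M.le_coe_toNNReal)
          (lipschitzOnWith_abs_one_sub_two_div.dist_le_mul p hp q hq) dist_nonneg (by positivity)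
    _ = ↑(M.toNNReal / 2) * dist p q := by push_cast; ring

theorem antitoneOn_sub_abs_one_sub_two_div_mul (a c : ℝ) :
    AntitoneOn (fun p : ℝ => a - |1 - 2 / p| * |c|) (Ici 2) :=
  fun _ hp _ hq hpq => sub_le_sub_left
    (mul_le_mul_of_nonneg_right (monotoneOn_abs_one_sub_two_div hp hq hpq) (abs_nonneg c)) a

noncomputable def conjE {d : ℕ} (ξ : EuclideanSpace ℂ (Fin d)) : EuclideanSpace ℂ (Fin d) :=
  WithLp.toLp 2 (fun i => conj (ξ i))

theorem norm_conjE {d : ℕ} (ξ : EuclideanSpace ℂ (Fin d)) : ‖conjE ξ‖ = ‖ξ‖ := by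
  simp [EuclideanSpace.norm_eq, conjE]

theorem mulVecE_smul {d : ℕ} (A : Matrix (Fin d) (Fin d) ℂ) (c : ℂ)
    (ξ : EuclideanSpace ℂ (Fin d)) : mulVecE A (c • ξ) = c • mulVecE A ξ := by
  ext i
  simp [mulVecE, Finset.mul_sum, mul_left_comm]

namespace Delta

variable {d : ℕ} (A : Matrix (Fin d) (Fin d) ℂ)

noncomputable def reInner (ξ : EuclideanSpace ℂ (Fin d)) : ℝ := (inner ℂ (mulVecE A ξ) ξ).re

noncomputable def reInnerConj (ξ : EuclideanSpace ℂ (Fin d)) : ℝ :=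
  (inner ℂ (mulVecE A ξ) (conjE ξ)).re

theorem re_inner_mulVecE_Ip (p : ℝ) (ξ : EuclideanSpace ℂ (Fin d)) :
    (inner ℂ (mulVecE A ξ) (Ip p ξ)).re = reInner A ξ + (1 - 2 / p) * reInnerConj A ξ := by
  have hIp : Ip p ξ = ξ + ((1 - 2 / p : ℝ) : ℂ) • conjE ξ := by
    ext i
    simp [Ip, conjE]
  simp [hIp, reInner, reInnerConj]

theorem reInner_I_smul (ξ : EuclideanSpace ℂ (Fin d)) :
    reInner A (Complex.I • ξ) = reInner A ξ := by
  simp [reInner, mulVecE_smul]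

theorem reInnerConj_I_smul (ξ : EuclideanSpace ℂ (Fin d)) :
    reInnerConj A (Complex.I • ξ) = -reInnerConj A ξ := by
  have hconj : conjE (Complex.I • ξ) = (-Complex.I) • conjE ξ := by
    ext i
    simp [conjE]
  simp [reInnerConj, hconj, mulVecE_smul, inner_smul_left, inner_smul_right]

variable {A} {Λ : ℝ}

theorem abs_reInner_le
    (hΛ : ∀ ξ σ : EuclideanSpace ℂ (Fin d), ‖inner ℂ (mulVecE A ξ) σ‖ ≤ Λ * ‖ξ‖ * ‖σ‖)
    {ξ : EuclideanSpace ℂ (Fin d)} (hξ : ‖ξ‖ = 1) : |reInner A ξ| ≤ Λ := by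
  simpa [reInner, hξ] using (Complex.abs_re_le_norm _).trans (hΛ ξ ξ)

theorem abs_reInnerConj_le
    (hΛ : ∀ ξ σ : EuclideanSpace ℂ (Fin d), ‖inner ℂ (mulVecE A ξ) σ‖ ≤ Λ * ‖ξ‖ * ‖σ‖)
    {ξ : EuclideanSpace ℂ (Fin d)} (hξ : ‖ξ‖ = 1) :
    |reInnerConj A ξ| ≤ Λ := by
  simpa [reInnerConj, hξ, norm_conjE] using (Complex.abs_re_le_norm _).trans (hΛ ξ (conjE ξ))

theorem bddBelow_range
    (hΛ : ∀ ξ σ : EuclideanSpace ℂ (Fin d), ‖inner ℂ (mulVecE A ξ) σ‖ ≤ Λ * ‖ξ‖ * ‖σ‖) (t : ℝ) :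
    BddBelow (range fun ξ : sphere (0 : EuclideanSpace ℂ (Fin d)) 1 =>
      reInner A ξ - |t| * |reInnerConj A ξ|) := by
  refine ⟨-Λ - |t| * Λ, forall_mem_range.mpr fun ⟨ξ, hξ⟩ => ?_⟩
  rw [mem_sphere_zero_iff_norm] at hξ
  have hg := abs_le.mp (abs_reInner_le hΛ hξ)
  have hh := mul_le_mul_of_nonneg_left (abs_reInnerConj_le hΛ hξ) (abs_nonneg t)
  dsimp only
  linarith [hg.1]

theorem eq_ciInf
    (hΛ : ∀ ξ σ : EuclideanSpace ℂ (Fin d), ‖inner ℂ (mulVecE A ξ) σ‖ ≤ Λ * ‖ξ‖ * ‖σ‖) (p : ℝ) :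
    Delta p A = ⨅ ξ : sphere (0 : EuclideanSpace ℂ (Fin d)) 1,
      (reInner A ξ - |1 - 2 / p| * |reInnerConj A ξ|) := by
  have hset : { r : ℝ | ∃ ξ : EuclideanSpace ℂ (Fin d), ‖ξ‖ = 1 ∧
      r = (inner ℂ (mulVecE A ξ) (Ip p ξ)).re } =
      range fun ξ : sphere (0 : EuclideanSpace ℂ (Fin d)) 1 =>
        reInner A ξ + (1 - 2 / p) * reInnerConj A ξ := by
    ext r
    simp [re_inner_mulVecE_Ip, eq_comm]
  rw [Delta, hset, ← iInf]
  refine ciInf_add_mul_eq_ciInf_sub_abs_mul _ _ _ (fun ⟨ξ, hξ⟩ => ?_) (bddBelow_range hΛ _)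
  refine ⟨⟨Complex.I • ξ, ?_⟩, reInner_I_smul A ξ, reInnerConj_I_smul A ξ⟩
  simpa [norm_smul] using hξ

end Delta

theorem stmt2_general {d : ℕ} (A : Matrix (Fin d) (Fin d) ℂ) (Λ : ℝ)
    (hΛ : ∀ ξ σ : EuclideanSpace ℂ (Fin d),
      ‖(@inner ℂ _ _ (mulVecE A ξ) σ)‖ ≤ Λ * ‖ξ‖ * ‖σ‖) :
    (∃ C : NNReal, LipschitzOnWith C (fun p : ℝ => Delta p A) (Set.Ici 2)) ∧
      AntitoneOn (fun p : ℝ => Delta p A) (Set.Ici 2) := by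
  have hbdd := fun p (_ : p ∈ Ici (2 : ℝ)) => Delta.bddBelow_range hΛ (1 - 2 / p)
  simp only [Delta.eq_ciInf hΛ]
  refine ⟨⟨Λ.toNNReal / 2, LipschitzOnWith.ciInf (fun ⟨ξ, hξ⟩ => ?_) hbdd⟩,
    AntitoneOn.ciInf (fun _ => antitoneOn_sub_abs_one_sub_two_div_mul _ _) hbdd⟩
  exact lipschitzOnWith_sub_abs_one_sub_two_div_mul _
    (Delta.abs_reInnerConj_le hΛ (mem_sphere_zero_iff_norm.mp hξ))

/-- `p ↦ Δ_p(A)` is Lipschitz and nonincreasing on `[2,∞)`. -/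
theorem stmt2 {d : ℕ} (hd : 0 < d) (A : Matrix (Fin d) (Fin d) ℂ) (Λ : ℝ)
    (hΛ : ∀ ξ σ : EuclideanSpace ℂ (Fin d),
      ‖(@inner ℂ _ _ (mulVecE A ξ) σ)‖ ≤ Λ * ‖ξ‖ * ‖σ‖) :
    (∃ C : NNReal, LipschitzOnWith C (fun p : ℝ => Delta p A) (Set.Ici 2)) ∧
      AntitoneOn (fun p : ℝ => Delta p A) (Set.Ici 2) :=
  stmt2_general A Λ hΛ
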